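/- Let D be a bounded open subset of ℂ and A a nonempty closed subset of the closure of D. Suppose that for every continuous function f : ℂ → ℝ with compact support contained in D, the limit lim_{γ→0⁺} (𝔐_A(F_γ), f) exists. Then for every α > 2, every admissible α-cutoff G, and every continuous f with compact support contained in D, the limit lim_{r→0⁺} (𝔐_A(𝒥^G_{r,α}), f) exists. -/

import Mathlib

open MeasureTheory Filter

/-- `(𝔐_A(F), f) = ∫_{D∖A} f(z)·F(dist(z,A)) dz`, with respect to Lebesgue measure on ℂ. -/
noncomputable def Mint (D A : Set ℂ) (F : ℝ → ℝ) (f : ℂ → ℝ) : ℝ :=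
  ∫ z in D \ A, f z * F (Metric.infDist z A)

/-- `𝒥_r(s) = |log r|^{1/2} · 1_{(0,r)}(s)` -/
noncomputable def Jfun (r s : ℝ) : ℝ :=
  if s ∈ Set.Ioo 0 r then Real.sqrt |Real.log r| else 0

/-- `F_γ(s) = (γ/√(2π)) · 1_{(0,1)}(s) · |log s| · s^{γ²/2}` -/
noncomputable def Ffun (γ s : ℝ) : ℝ :=
  if s ∈ Set.Ioo (0:ℝ) 1 then γ / Real.sqrt (2 * Real.pi) * |Real.log s| * s ^ (γ ^ 2 / 2) else 0

/-- An admissible `α`-cutoff: a smooth function `G` with `0 ≤ G ≤ (log 2)^{1/2}`, equal to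
`(log 2)^{1/2}` on `[2^{−α}, 1/2 − 2^{−α}]` and vanishing outside `(2^{−2α}, 1/2)`. -/
def IsAdmissibleCutoff (α : ℝ) (G : ℝ → ℝ) : Prop :=
  ContDiff ℝ (⊤ : ℕ∞) G ∧
  (∀ s, 0 ≤ G s) ∧ (∀ s, G s ≤ Real.sqrt (Real.log 2)) ∧
  (∀ s ∈ Set.Icc ((2:ℝ) ^ (-α)) (1 / 2 - (2:ℝ) ^ (-α)), G s = Real.sqrt (Real.log 2)) ∧
  (∀ s, s ∉ Set.Ioo ((2:ℝ) ^ (-(2 * α))) (1 / 2) → G s = 0)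

/-- `𝒥^G_{r,α}(s) = β^{−1/2}·G(s^β)` for `s ∈ (0,∞)`, where `β = (log 2)/|log r|`. -/
noncomputable def JGfun (G : ℝ → ℝ) (r s : ℝ) : ℝ :=
  if 0 < s then
    (Real.log 2 / |Real.log r|) ^ (-(1 / 2) : ℝ) * G (s ^ (Real.log 2 / |Real.log r|))
  else 0


section Stmt6Aux

lemma mul_exp_neg_le {c t : ℝ} (hc : 0 < c) (ht : 0 ≤ t) :
    t * Real.exp (-(c * t)) ≤ c⁻¹ := by
  have h1 : c * t ≤ Real.exp (c * t) := by
    have := Real.add_one_le_exp (c * t); linarith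
  have hE : Real.exp (-(c * t)) * Real.exp (c * t) = 1 := by
    rw [← Real.exp_add]; simp
  have key : t * Real.exp (-(c * t)) * c ≤ 1 := by
    nlinarith [Real.exp_pos (-(c * t)), Real.exp_pos (c * t),
      mul_le_mul_of_nonneg_right h1 (Real.exp_pos (-(c * t))).le]
  exact (mul_le_mul_iff_left₀ hc).mp (by rw [inv_mul_cancel₀ hc.ne']; exact key)

lemma exists_tendsto_of_approx {J : ℝ → ℝ} {l : Filter ℝ} [hl : l.NeBot]
    (H : ∀ ε : ℝ, 0 < ε → ∃ h : ℝ → ℝ, ∃ Lh : ℝ,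
      Tendsto h l (nhds Lh) ∧ ∀ᶠ r in l, |J r - h r| ≤ ε) :
    ∃ L : ℝ, Tendsto J l (nhds L) := by
  have hc : Cauchy (Filter.map J l) := by
    rw [Metric.cauchy_iff]
    refine ⟨Filter.map_neBot, fun ε hε => ?_⟩
    obtain ⟨h, Lh, hth, happ⟩ := H (ε/5) (by linarith)
    have h2 : ∀ᶠ r in l, |h r - Lh| < ε/5 := by
      have := Metric.tendsto_nhds.mp hth (ε/5) (by linarith)
      simpa [Real.dist_eq] using this
    have hs : {r | |J r - h r| ≤ ε/5 ∧ |h r - Lh| < ε/5} ∈ l := by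
      filter_upwards [happ, h2] with r ha hb using ⟨ha, hb⟩
    refine ⟨J '' {r | |J r - h r| ≤ ε/5 ∧ |h r - Lh| < ε/5}, ?_, ?_⟩
    · rw [Filter.mem_map]
      exact Filter.mem_of_superset hs (fun r hr => Set.mem_image_of_mem J hr)
    · rintro x ⟨r1, hr1, rfl⟩ y ⟨r2, hr2, rfl⟩
      rw [Real.dist_eq]
      have t1 : |J r1 - Lh| ≤ |J r1 - h r1| + |h r1 - Lh| := abs_sub_le _ _ _
      have t2 : |J r2 - Lh| ≤ |J r2 - h r2| + |h r2 - Lh| := abs_sub_le _ _ _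
      have t3 : |J r1 - J r2| ≤ |J r1 - Lh| + |Lh - J r2| := abs_sub_le _ _ _
      have t4 : |Lh - J r2| = |J r2 - Lh| := abs_sub_comm _ _
      have t5 : |J r2 - h r2| = |h r2 - J r2| := abs_sub_comm _ _
      linarith [hr1.1, hr1.2, hr2.1, hr2.2]
  obtain ⟨L, hL⟩ := CompleteSpace.complete hc
  exact ⟨L, hL⟩


lemma measurable_Ffun (γ : ℝ) : Measurable (Ffun γ) := by
  unfold Ffun
  refine Measurable.ite ?_ ?_ measurable_const
  · exact measurableSet_Ioo
  · exact ((measurable_const.mul Real.measurable_log.abs).mul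
      (Real.continuous_rpow_const (by positivity)).measurable)

lemma measurable_JGfun (G : ℝ → ℝ) (hGc : Continuous G) (r : ℝ) :
    Measurable (JGfun G r) := by
  unfold JGfun
  refine Measurable.ite ?_ ?_ measurable_const
  · exact measurableSet_Ioi
  · exact measurable_const.mul
      (hGc.measurable.comp (Real.continuous_rpow_const (by positivity)).measurable)

lemma Ffun_abs_le {γ : ℝ} (hγ : 0 < γ) (s : ℝ) :
    |Ffun γ s| ≤ γ / Real.sqrt (2 * Real.pi) * (γ ^ 2 / 2)⁻¹ := by
  unfold Ffun; split_ifs with h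
  · obtain ⟨hs0, hs1⟩ := h
    have hlog : Real.log s < 0 := Real.log_neg hs0 hs1
    have hrw : s ^ (γ ^ 2 / 2) = Real.exp (-((γ ^ 2 / 2) * (-Real.log s))) := by
      rw [Real.rpow_def_of_pos hs0]; congr 1; ring
    have hc : 0 ≤ γ / Real.sqrt (2 * Real.pi) := by positivity
    rw [abs_of_neg hlog, hrw, abs_of_nonneg
      (mul_nonneg (mul_nonneg hc (by linarith)) (Real.exp_pos _).le), mul_assoc]
    exact mul_le_mul_of_nonneg_left
      (mul_exp_neg_le (by positivity) (by linarith)) hc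
  · rw [abs_zero]; positivity

lemma Ffun_nonneg {γ : ℝ} (hγ : 0 ≤ γ) (s : ℝ) : 0 ≤ Ffun γ s := by
  unfold Ffun; split_ifs with h
  · have hc : 0 ≤ γ / Real.sqrt (2 * Real.pi) := by positivity
    exact mul_nonneg (mul_nonneg hc (abs_nonneg _)) (Real.rpow_nonneg h.1.le _)
  · exact le_refl 0

lemma JGfun_abs_le {α : ℝ} {G : ℝ → ℝ} (hG : IsAdmissibleCutoff α G) (r s : ℝ) :
    |JGfun G r s| ≤ (Real.log 2 / |Real.log r|) ^ (-(1 / 2) : ℝ) * Real.sqrt (Real.log 2) := by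
  have h0 : (0:ℝ) ≤ (Real.log 2 / |Real.log r|) ^ (-(1 / 2) : ℝ) :=
    Real.rpow_nonneg (by positivity) _
  unfold JGfun; split_ifs with h
  · rw [abs_mul, abs_of_nonneg h0, abs_of_nonneg (hG.2.1 _)]
    exact mul_le_mul_of_nonneg_left (hG.2.2.1 _) h0
  · rw [abs_zero]; positivity

lemma integrable_aux (A S : Set ℂ) {f : ℂ → ℝ} (hf : Continuous f) (hfc : HasCompactSupport f)
    {h : ℝ → ℝ} (hh : Measurable h) {C : ℝ} (hC : ∀ s, |h s| ≤ C) :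
    IntegrableOn (fun z => f z * h (Metric.infDist z A)) S volume := by
  apply MeasureTheory.Integrable.integrableOn
  have hfabs : HasCompactSupport (fun z : ℂ => |f z| * C) := by
    simpa [Function.comp_def] using hfc.comp_left (g := fun x : ℝ => |x| * C) (by simp)
  have hint : Integrable (fun z : ℂ => |f z| * C) volume :=
    ((hf.abs).mul continuous_const).integrable_of_hasCompactSupport hfabs
  apply hint.mono'
  · exact hf.aestronglyMeasurable.mul
      ((hh.comp (Metric.continuous_infDist_pt A).measurable).aestronglyMeasurable)
  · refine Filter.Eventually.of_forall (fun z => ?_)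
    rw [Real.norm_eq_abs, abs_mul]
    exact mul_le_mul_of_nonneg_left (hC _) (abs_nonneg _)


noncomputable def qfun (G : ℝ → ℝ) : ℝ → ℝ := fun t =>
  if t ∈ Set.Ioo (0:ℝ) 1 then G t / (-Real.log t * Real.sqrt t) else 0

lemma qfun_zero_of_left {α : ℝ} {G : ℝ → ℝ} (hG : IsAdmissibleCutoff α G) {t : ℝ}
    (ht : t < (2:ℝ) ^ (-(2 * α))) : qfun G t = 0 := by
  have hG0 : G t = 0 := hG.2.2.2.2 t (fun hmem => absurd hmem.1 (not_lt.mpr ht.le))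
  unfold qfun; split_ifs with h
  · rw [hG0, zero_div]
  · rfl

lemma qfun_zero_of_right {α : ℝ} {G : ℝ → ℝ} (hG : IsAdmissibleCutoff α G) {t : ℝ}
    (ht : 1 / 2 < t) : qfun G t = 0 := by
  have hG0 : G t = 0 := hG.2.2.2.2 t (fun hmem => absurd hmem.2 (not_lt.mpr ht.le))
  unfold qfun; split_ifs with h
  · rw [hG0, zero_div]
  · rfl

lemma qfun_continuous {α : ℝ} {G : ℝ → ℝ} (hα : 2 < α) (hG : IsAdmissibleCutoff α G) :
    Continuous (qfun G) := by
  have hc₀ : (0:ℝ) < (2:ℝ) ^ (-(2 * α)) := Real.rpow_pos_of_pos two_pos _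
  rw [continuous_iff_continuousAt]
  intro t
  rcases lt_or_ge t ((2:ℝ) ^ (-(2 * α))) with h1 | h1
  · have heq : ∀ᶠ u in nhds t, (0:ℝ) = qfun G u := by
      filter_upwards [Iio_mem_nhds h1] with u hu
      exact (qfun_zero_of_left hG hu).symm
    exact continuousAt_const.congr heq
  rcases lt_or_ge (1/2 : ℝ) t with h2 | h2
  · have heq : ∀ᶠ u in nhds t, (0:ℝ) = qfun G u := by
      filter_upwards [Ioi_mem_nhds h2] with u hu
      exact (qfun_zero_of_right hG hu).symm
    exact continuousAt_const.congr heq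
  · have ht0 : 0 < t := lt_of_lt_of_le hc₀ h1
    have ht1 : t < 1 := lt_of_le_of_lt h2 (by norm_num)
    have hca : ContinuousAt (fun u => G u / (-Real.log u * Real.sqrt u)) t := by
      apply ContinuousAt.div
      · exact hG.1.continuous.continuousAt
      · exact ((Real.continuousAt_log (ne_of_gt ht0)).neg.mul
          Real.continuous_sqrt.continuousAt)
      · have hl : Real.log t < 0 := Real.log_neg ht0 ht1
        have hsq : 0 < Real.sqrt t := Real.sqrt_pos.2 ht0
        exact ne_of_gt (mul_pos (by linarith) hsq)
    have heq : ∀ᶠ u in nhds t, G u / (-Real.log u * Real.sqrt u) = qfun G u := by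
      filter_upwards [Ioo_mem_nhds ht0 ht1] with u hu
      unfold qfun; rw [if_pos hu]
    exact hca.congr heq


lemma sqrt_Ffun_eq {a βr s : ℝ} (ha : 0 < a) (hβ : 0 < βr) (hs : s ∈ Set.Ioo (0:ℝ) 1) :
    Real.sqrt (Real.pi / a) * Ffun (Real.sqrt (2 * a * βr)) s
      = (Real.sqrt βr)⁻¹ * ((βr * -Real.log s) *
          Real.exp (-(a * (βr * -Real.log s)))) := by
  have hs0 := hs.1
  have hlog : Real.log s < 0 := Real.log_neg hs.1 hs.2
  unfold Ffun; rw [if_pos hs]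
  have hγ2 : Real.sqrt (2 * a * βr) ^ 2 = 2 * a * βr := Real.sq_sqrt (by positivity)
  rw [hγ2]
  have hexp : s ^ (2 * a * βr / 2) = Real.exp (-(a * (βr * -Real.log s))) := by
    rw [Real.rpow_def_of_pos hs0]; congr 1; ring
  rw [hexp, abs_of_neg hlog]
  have hconst : Real.sqrt (Real.pi / a) * (Real.sqrt (2 * a * βr) / Real.sqrt (2 * Real.pi))
      = Real.sqrt βr := by
    have hmul : Real.pi / a * (2 * a * βr) = 2 * Real.pi * βr := by
      field_simp
    have hdiv : 2 * Real.pi * βr / (2 * Real.pi) = βr := by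
      field_simp
    rw [← mul_div_assoc, ← Real.sqrt_mul (by positivity), hmul,
      ← Real.sqrt_div (by positivity), hdiv]
  have hbne : Real.sqrt βr ≠ 0 := ne_of_gt (Real.sqrt_pos.2 hβ)
  have hβr : Real.sqrt βr * Real.sqrt βr = βr := Real.mul_self_sqrt hβ.le
  have hgen : ∀ X : ℝ, Real.sqrt βr * X = (Real.sqrt βr)⁻¹ * (βr * X) := by
    intro X; field_simp; linear_combination X * hβr
  calc Real.sqrt (Real.pi / a) *
        (Real.sqrt (2 * a * βr) / Real.sqrt (2 * Real.pi) * -Real.log s *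
          Real.exp (-(a * (βr * -Real.log s))))
      = (Real.sqrt (Real.pi / a) * (Real.sqrt (2 * a * βr) / Real.sqrt (2 * Real.pi))) *
          (-Real.log s * Real.exp (-(a * (βr * -Real.log s)))) := by ring
    _ = Real.sqrt βr * (-Real.log s * Real.exp (-(a * (βr * -Real.log s)))) := by rw [hconst]
    _ = (Real.sqrt βr)⁻¹ * (βr * (-Real.log s * Real.exp (-(a * (βr * -Real.log s))))) :=
        hgen _
    _ = (Real.sqrt βr)⁻¹ * ((βr * -Real.log s) * Real.exp (-(a * (βr * -Real.log s)))) := by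
        ring


lemma pointwise_est {α : ℝ} {G : ℝ → ℝ} (hG : IsAdmissibleCutoff α G)
    {ε₀ : ℝ} {n : ℕ} {d : ℕ → ℝ}
    (hqd : ∀ t ∈ Set.Icc (0:ℝ) 1, |qfun G t - ∑ i ∈ Finset.range n, d i * t ^ i| ≤ ε₀)
    {r : ℝ} (hr : r ∈ Set.Ioo (0:ℝ) 1) {s : ℝ} (hs : 0 < s) :
    |JGfun G r s - ∑ i ∈ Finset.range n, d i * (Real.sqrt (Real.pi / (i + 1/2)) *
        Ffun (Real.sqrt (2 * (i + 1/2) * (Real.log 2 / |Real.log r|))) s)|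
      ≤ ε₀ * (Real.sqrt (2 * Real.pi) * Ffun (Real.sqrt (Real.log 2 / |Real.log r|)) s) := by
  have hlogr : Real.log r < 0 := Real.log_neg hr.1 hr.2
  set βr := Real.log 2 / |Real.log r| with hβr
  have hβ : 0 < βr := by
    rw [hβr]
    exact div_pos (Real.log_pos one_lt_two) (abs_pos.2 (ne_of_lt hlogr))
  by_cases hs1 : s < 1
  · -- main case
    have hsIoo : s ∈ Set.Ioo (0:ℝ) 1 := ⟨hs, hs1⟩
    have hlogs : Real.log s < 0 := Real.log_neg hs hs1
    set x := βr * -Real.log s with hx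
    have hx0 : 0 < x := mul_pos hβ (by linarith)
    set t := Real.exp (-x) with ht
    have htIoo : t ∈ Set.Ioo (0:ℝ) 1 := by
      constructor
      · exact Real.exp_pos _
      · rw [ht]; exact Real.exp_lt_one_iff.mpr (by linarith)
    have hspow : s ^ βr = t := by
      rw [Real.rpow_def_of_pos hs, ht, hx]; congr 1; ring
    have hrpowhalf : βr ^ (-(1/2) : ℝ) = (Real.sqrt βr)⁻¹ := by
      rw [Real.rpow_neg hβ.le, Real.sqrt_eq_rpow]
    have hJG : JGfun G r s = (Real.sqrt βr)⁻¹ * G t := by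
      unfold JGfun
      rw [if_pos hs, ← hβr, hspow, hrpowhalf]
    have hlogt : Real.log t = -x := Real.log_exp _
    have hsqrtt : Real.sqrt t = Real.exp (-(x/2)) := by
      rw [ht, Real.sqrt_eq_rpow, Real.rpow_def_of_pos (Real.exp_pos _), Real.log_exp]
      congr 1; ring
    have hE0 : (0:ℝ) < x * Real.exp (-(x/2)) := mul_pos hx0 (Real.exp_pos _)
    have hGt : G t = qfun G t * (x * Real.exp (-(x/2))) := by
      unfold qfun
      rw [if_pos htIoo, hlogt, hsqrtt, neg_neg, div_mul_cancel₀ _ (ne_of_gt hE0)]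
    have hterm : ∀ i ∈ Finset.range n,
        d i * (Real.sqrt (Real.pi / (i + 1/2)) *
          Ffun (Real.sqrt (2 * (i + 1/2) * βr)) s)
        = (Real.sqrt βr)⁻¹ * ((x * Real.exp (-(x/2))) * (d i * t ^ i)) := by
      intro i _
      have ha : (0:ℝ) < (i:ℝ) + 1/2 := by positivity
      rw [sqrt_Ffun_eq ha hβ hsIoo]
      have hti : t ^ i = Real.exp (-((i:ℝ) * x)) := by
        rw [ht, ← Real.exp_nat_mul]; congr 1; ring
      have hsplit : Real.exp (-(((i:ℝ) + 1/2) * x))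
          = Real.exp (-((i:ℝ) * x)) * Real.exp (-(x/2)) := by
        rw [← Real.exp_add]; congr 1; ring
      rw [← hx, show -(((i:ℝ) + 1/2) * (βr * -Real.log s)) = -(((i:ℝ) + 1/2) * x) from by rw [← hx]]
      rw [hsplit, hti]
      ring
    rw [hJG, hGt, Finset.sum_congr rfl hterm]
    have hrhs : Real.sqrt (2 * Real.pi) * Ffun (Real.sqrt βr) s
        = (Real.sqrt βr)⁻¹ * (x * Real.exp (-(x/2))) := by
      have h := sqrt_Ffun_eq (a := (1:ℝ)/2) (by norm_num) hβ hsIoo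
      rw [show 2 * ((1:ℝ)/2) * βr = βr from by ring] at h
      rw [show Real.pi / ((1:ℝ)/2) = 2 * Real.pi from by ring] at h
      rw [h, ← hx, show -((1:ℝ)/2 * x) = -(x/2) from by ring]
    have hfac : (Real.sqrt βr)⁻¹ * (qfun G t * (x * Real.exp (-(x/2))))
        - ∑ i ∈ Finset.range n, (Real.sqrt βr)⁻¹ * ((x * Real.exp (-(x/2))) * (d i * t ^ i))
        = (Real.sqrt βr)⁻¹ * ((x * Real.exp (-(x/2))) *
            (qfun G t - ∑ i ∈ Finset.range n, d i * t ^ i)) := by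
      rw [← Finset.mul_sum, ← Finset.mul_sum, ← mul_sub]
      ring
    rw [hfac, hrhs]
    have hb0 : (0:ℝ) ≤ (Real.sqrt βr)⁻¹ := by positivity
    rw [abs_mul, abs_of_nonneg hb0, abs_mul, abs_of_nonneg hE0.le]
    calc (Real.sqrt βr)⁻¹ * ((x * Real.exp (-(x/2))) *
            |qfun G t - ∑ i ∈ Finset.range n, d i * t ^ i|)
        ≤ (Real.sqrt βr)⁻¹ * ((x * Real.exp (-(x/2))) * ε₀) := by
          apply mul_le_mul_of_nonneg_left
            (mul_le_mul_of_nonneg_left (hqd t ⟨htIoo.1.le, htIoo.2.le⟩) hE0.le) hb0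
      _ = ε₀ * ((Real.sqrt βr)⁻¹ * (x * Real.exp (-(x/2)))) := by ring
  · -- s ≥ 1 case
    have hnot : s ∉ Set.Ioo (0:ℝ) 1 := fun h => hs1 h.2
    have hJG0 : JGfun G r s = 0 := by
      unfold JGfun
      rw [if_pos hs, ← hβr]
      have h1 : (1:ℝ) ≤ s ^ βr := Real.one_le_rpow (not_lt.1 hs1) hβ.le
      have hg0 : G (s ^ βr) = 0 := by
        apply hG.2.2.2.2
        intro hmem
        have := hmem.2
        norm_num at this
        linarith
      rw [hg0, mul_zero]
    have hF0 : ∀ γ : ℝ, Ffun γ s = 0 := fun γ => if_neg hnot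
    rw [hJG0]
    simp only [hF0, mul_zero]
    simp


lemma integral_est (D A : Set ℂ) (hD : IsOpen D) (hA : IsClosed A) (hAne : A.Nonempty)
    {f : ℂ → ℝ} (hf : Continuous f) (hfc : HasCompactSupport f)
    {α : ℝ} {G : ℝ → ℝ} (hG : IsAdmissibleCutoff α G)
    {ε₀ : ℝ} {n : ℕ} {d : ℕ → ℝ}
    (hqd : ∀ t ∈ Set.Icc (0:ℝ) 1, |qfun G t - ∑ i ∈ Finset.range n, d i * t ^ i| ≤ ε₀)
    {r : ℝ} (hr : r ∈ Set.Ioo (0:ℝ) 1) :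
    |Mint D A (JGfun G r) f - ∑ i ∈ Finset.range n, d i * (Real.sqrt (Real.pi / (i + 1/2)) *
        Mint D A (Ffun (Real.sqrt (2 * (i + 1/2) * (Real.log 2 / |Real.log r|)))) f)|
      ≤ ε₀ * (Real.sqrt (2 * Real.pi) *
          Mint D A (Ffun (Real.sqrt (Real.log 2 / |Real.log r|))) (fun z => |f z|)) := by
  have hlogr : Real.log r < 0 := Real.log_neg hr.1 hr.2
  have hβ : 0 < Real.log 2 / |Real.log r| :=
    div_pos (Real.log_pos one_lt_two) (abs_pos.2 (ne_of_lt hlogr))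
  set βr := Real.log 2 / |Real.log r| with hβr
  have hmeasS : MeasurableSet (D \ A) := hD.measurableSet.diff hA.measurableSet
  have hfabs_c : Continuous (fun z : ℂ => |f z|) := hf.abs
  have hfabs_cs : HasCompactSupport (fun z : ℂ => |f z|) := by
    simpa [Function.comp_def] using hfc.comp_left (g := fun x : ℝ => |x|) abs_zero
  -- integrability
  have hint1 : IntegrableOn (fun z => f z * JGfun G r (Metric.infDist z A)) (D \ A) volume :=
    integrable_aux A _ hf hfc (measurable_JGfun G hG.1.continuous r) (JGfun_abs_le hG r)
  have hintF : ∀ γ : ℝ, 0 < γ →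
      IntegrableOn (fun z => f z * Ffun γ (Metric.infDist z A)) (D \ A) volume :=
    fun γ hγ => integrable_aux A _ hf hfc (measurable_Ffun γ) (Ffun_abs_le hγ)
  have hintFabs : ∀ γ : ℝ, 0 < γ →
      IntegrableOn (fun z => |f z| * Ffun γ (Metric.infDist z A)) (D \ A) volume :=
    fun γ hγ => integrable_aux A _ hfabs_c hfabs_cs (measurable_Ffun γ) (Ffun_abs_le hγ)
  have hγpos : ∀ i : ℕ, (0:ℝ) < Real.sqrt (2 * ((i:ℝ) + 1/2) * βr) := by
    intro i
    apply Real.sqrt_pos.2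
    positivity
  have hintsum : ∀ i ∈ Finset.range n, Integrable
      (fun z => (d i * Real.sqrt (Real.pi / ((i:ℝ) + 1/2))) *
        (f z * Ffun (Real.sqrt (2 * ((i:ℝ) + 1/2) * βr)) (Metric.infDist z A)))
      (volume.restrict (D \ A)) :=
    fun i _ => (hintF _ (hγpos i)).const_mul _
  -- the difference as a single integral
  have key : Mint D A (JGfun G r) f - ∑ i ∈ Finset.range n, d i *
        (Real.sqrt (Real.pi / (i + 1/2)) * Mint D A (Ffun (Real.sqrt (2 * (i + 1/2) * βr))) f)
      = ∫ z in D \ A, (f z * JGfun G r (Metric.infDist z A)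
          - ∑ i ∈ Finset.range n, (d i * Real.sqrt (Real.pi / ((i:ℝ) + 1/2))) *
              (f z * Ffun (Real.sqrt (2 * ((i:ℝ) + 1/2) * βr)) (Metric.infDist z A))) := by
    rw [integral_sub hint1 (integrable_finset_sum _ hintsum), integral_finset_sum _ hintsum]
    simp only [Mint]
    congr 1
    refine Finset.sum_congr rfl (fun i _ => ?_)
    rw [integral_const_mul]
    ring
  rw [key]
  have hdiffint : Integrable (fun z => f z * JGfun G r (Metric.infDist z A)
      - ∑ i ∈ Finset.range n, (d i * Real.sqrt (Real.pi / ((i:ℝ) + 1/2))) *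
          (f z * Ffun (Real.sqrt (2 * ((i:ℝ) + 1/2) * βr)) (Metric.infDist z A)))
      (volume.restrict (D \ A)) := hint1.sub (integrable_finset_sum _ hintsum)
  have hdomint : Integrable (fun z => (ε₀ * Real.sqrt (2 * Real.pi)) *
      (|f z| * Ffun (Real.sqrt βr) (Metric.infDist z A))) (volume.restrict (D \ A)) :=
    (hintFabs _ (Real.sqrt_pos.2 hβ)).const_mul _
  have hae : ∀ᵐ z ∂(volume.restrict (D \ A)),
      |f z * JGfun G r (Metric.infDist z A)
        - ∑ i ∈ Finset.range n, (d i * Real.sqrt (Real.pi / ((i:ℝ) + 1/2))) *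
            (f z * Ffun (Real.sqrt (2 * ((i:ℝ) + 1/2) * βr)) (Metric.infDist z A))|
      ≤ (ε₀ * Real.sqrt (2 * Real.pi)) *
          (|f z| * Ffun (Real.sqrt βr) (Metric.infDist z A)) := by
    rw [ae_restrict_iff' hmeasS]
    refine Filter.Eventually.of_forall (fun z hz => ?_)
    have hdz : 0 < Metric.infDist z A := (hA.notMem_iff_infDist_pos hAne).1 hz.2
    have hpt := pointwise_est hG hqd hr hdz
    have hfactor : (∑ i ∈ Finset.range n, (d i * Real.sqrt (Real.pi / ((i:ℝ) + 1/2))) *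
        (f z * Ffun (Real.sqrt (2 * ((i:ℝ) + 1/2) * βr)) (Metric.infDist z A)))
        = f z * ∑ i ∈ Finset.range n, d i * (Real.sqrt (Real.pi / ((i:ℝ) + 1/2)) *
            Ffun (Real.sqrt (2 * ((i:ℝ) + 1/2) * βr)) (Metric.infDist z A)) := by
      rw [Finset.mul_sum]
      exact Finset.sum_congr rfl (fun i _ => by ring)
    rw [hfactor, ← mul_sub, abs_mul]
    calc |f z| * |JGfun G r (Metric.infDist z A)
          - ∑ i ∈ Finset.range n, d i * (Real.sqrt (Real.pi / ((i:ℝ) + 1/2)) *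
              Ffun (Real.sqrt (2 * ((i:ℝ) + 1/2) * βr)) (Metric.infDist z A))|
        ≤ |f z| * (ε₀ * (Real.sqrt (2 * Real.pi) *
            Ffun (Real.sqrt βr) (Metric.infDist z A))) :=
          mul_le_mul_of_nonneg_left hpt (abs_nonneg _)
      _ = (ε₀ * Real.sqrt (2 * Real.pi)) *
            (|f z| * Ffun (Real.sqrt βr) (Metric.infDist z A)) := by ring
  calc |∫ z in D \ A, (f z * JGfun G r (Metric.infDist z A)
          - ∑ i ∈ Finset.range n, (d i * Real.sqrt (Real.pi / ((i:ℝ) + 1/2))) *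
              (f z * Ffun (Real.sqrt (2 * ((i:ℝ) + 1/2) * βr)) (Metric.infDist z A)))|
      ≤ ∫ z in D \ A, |f z * JGfun G r (Metric.infDist z A)
          - ∑ i ∈ Finset.range n, (d i * Real.sqrt (Real.pi / ((i:ℝ) + 1/2))) *
              (f z * Ffun (Real.sqrt (2 * ((i:ℝ) + 1/2) * βr)) (Metric.infDist z A))| := by
        rw [← Real.norm_eq_abs]
        exact (norm_integral_le_integral_norm _).trans_eq (by simp [Real.norm_eq_abs])
    _ ≤ ∫ z in D \ A, (ε₀ * Real.sqrt (2 * Real.pi)) *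
          (|f z| * Ffun (Real.sqrt βr) (Metric.infDist z A)) :=
        integral_mono_ae hdiffint.abs hdomint hae
    _ = ε₀ * (Real.sqrt (2 * Real.pi) *
          Mint D A (Ffun (Real.sqrt βr)) (fun z => |f z|)) := by
        rw [integral_const_mul]
        simp only [Mint]
        ring

end Stmt6Aux

/-- If for every test function `f` the limit `lim_{γ→0⁺} (𝔐_A(F_γ), f)` exists, then for every
`α > 2`, every admissible `α`-cutoff `G` and every test function `f`, the limit
`lim_{r→0⁺} (𝔐_A(𝒥^G_{r,α}), f)` exists. -/
theorem stmt6 (D A : Set ℂ) (hD : IsOpen D) (hDb : Bornology.IsBounded D)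
    (hA : IsClosed A) (hAne : A.Nonempty) (hAD : A ⊆ closure D)
    (hF : ∀ f : ℂ → ℝ, Continuous f → HasCompactSupport f → tsupport f ⊆ D →
      ∃ L : ℝ, Tendsto (fun γ => Mint D A (Ffun γ) f) (nhdsWithin 0 (Set.Ioi 0)) (nhds L)) :
    ∀ α : ℝ, 2 < α → ∀ G : ℝ → ℝ, IsAdmissibleCutoff α G →
      ∀ f : ℂ → ℝ, Continuous f → HasCompactSupport f → tsupport f ⊆ D →
        ∃ L : ℝ, Tendsto (fun r => Mint D A (JGfun G r) f) (nhdsWithin 0 (Set.Ioi 0)) (nhds L) := by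
  intro α hα G hG f hf hfc hfs
  obtain ⟨L₀, hL₀⟩ := hF f hf hfc hfs
  have hfabs_c : Continuous (fun z : ℂ => |f z|) := hf.abs
  have hfabs_cs : HasCompactSupport (fun z : ℂ => |f z|) := by
    simpa [Function.comp_def] using hfc.comp_left (g := fun x : ℝ => |x|) abs_zero
  have hfabs_ts : tsupport (fun z : ℂ => |f z|) ⊆ D := by
    refine subset_trans (closure_mono ?_) hfs
    intro z hz
    simp only [Function.mem_support] at hz ⊢
    intro h0
    exact hz (by rw [h0]; simp)
  obtain ⟨L₁, hL₁⟩ := hF _ hfabs_c hfabs_cs hfabs_ts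
  -- tendsto of β and of the γ's
  have hβtend : Tendsto (fun r : ℝ => Real.log 2 / |Real.log r|)
      (nhdsWithin 0 (Set.Ioi 0)) (nhdsWithin 0 (Set.Ioi 0)) := by
    rw [tendsto_nhdsWithin_iff]
    constructor
    · exact Tendsto.div_atTop tendsto_const_nhds
        (tendsto_abs_atBot_atTop.comp Real.tendsto_log_nhdsGT_zero)
    · filter_upwards [Ioo_mem_nhdsGT_of_mem (Set.left_mem_Ico.2 one_pos)] with r hr
      have hlr : Real.log r < 0 := Real.log_neg hr.1 hr.2
      exact div_pos (Real.log_pos one_lt_two) (abs_pos.2 (ne_of_lt hlr))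
  have hγtend : ∀ c : ℝ, 0 < c → Tendsto
      (fun r : ℝ => Real.sqrt (c * (Real.log 2 / |Real.log r|)))
      (nhdsWithin 0 (Set.Ioi 0)) (nhdsWithin 0 (Set.Ioi 0)) := by
    intro c hc
    rw [tendsto_nhdsWithin_iff]
    constructor
    · have h1 : Tendsto (fun r : ℝ => c * (Real.log 2 / |Real.log r|))
          (nhdsWithin 0 (Set.Ioi 0)) (nhds 0) := by
        have := (hβtend.mono_right nhdsWithin_le_nhds).const_mul c
        simpa using this
      have h2 : Tendsto Real.sqrt (nhds 0) (nhds 0) := by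
        have := Real.continuous_sqrt.tendsto 0
        simpa using this
      exact h2.comp h1
    · filter_upwards [hβtend self_mem_nhdsWithin] with r hr
      exact Real.sqrt_pos.2 (mul_pos hc hr)
  apply exists_tendsto_of_approx
  intro ε hε
  set B := |L₁| + 1 with hB
  have hBpos : 0 < B := by positivity
  have hsqrtpos : 0 < Real.sqrt (2 * Real.pi) := Real.sqrt_pos.2 (by positivity)
  set ε₀ := ε / (Real.sqrt (2 * Real.pi) * B) with hε₀def
  have hε₀pos : 0 < ε₀ := div_pos hε (by positivity)
  obtain ⟨p, hp⟩ := exists_polynomial_near_of_continuousOn 0 1 (qfun G)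
    ((qfun_continuous hα hG).continuousOn) ε₀ hε₀pos
  set n := p.natDegree + 1 with hn
  set d : ℕ → ℝ := fun i => p.coeff i with hd
  have hqd : ∀ t ∈ Set.Icc (0:ℝ) 1,
      |qfun G t - ∑ i ∈ Finset.range n, d i * t ^ i| ≤ ε₀ := by
    intro t htI
    have h := hp t htI
    rw [hn, hd, ← Polynomial.eval_eq_sum_range, abs_sub_comm]
    exact le_of_lt h
  refine ⟨fun r => ∑ i ∈ Finset.range n, d i * (Real.sqrt (Real.pi / (i + 1/2)) *
      Mint D A (Ffun (Real.sqrt (2 * (i + 1/2) * (Real.log 2 / |Real.log r|)))) f),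
    ∑ i ∈ Finset.range n, d i * (Real.sqrt (Real.pi / (i + 1/2)) * L₀), ?_, ?_⟩
  · apply tendsto_finset_sum
    intro i _
    apply Tendsto.const_mul
    apply Tendsto.const_mul
    exact hL₀.comp (hγtend _ (by positivity))
  · have hev1 : ∀ᶠ r in nhdsWithin (0:ℝ) (Set.Ioi 0), r ∈ Set.Ioo (0:ℝ) 1 :=
      Ioo_mem_nhdsGT_of_mem (Set.left_mem_Ico.2 one_pos)
    have htd : Tendsto (fun r : ℝ => Mint D A
        (Ffun (Real.sqrt (Real.log 2 / |Real.log r|))) (fun z => |f z|))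
        (nhdsWithin 0 (Set.Ioi 0)) (nhds L₁) := by
      have := hL₁.comp (hγtend 1 one_pos)
      simpa [Function.comp_def] using this
    have hev2 : ∀ᶠ r in nhdsWithin (0:ℝ) (Set.Ioi 0), Mint D A
        (Ffun (Real.sqrt (Real.log 2 / |Real.log r|))) (fun z => |f z|) ≤ B := by
      have h1 := Metric.tendsto_nhds.mp htd 1 one_pos
      filter_upwards [h1] with r hr1
      rw [Real.dist_eq] at hr1
      have := le_abs_self L₁
      have := abs_sub_abs_le_abs_sub (Mint D A
        (Ffun (Real.sqrt (Real.log 2 / |Real.log r|))) (fun z => |f z|)) L₁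
      have := le_abs_self (Mint D A
        (Ffun (Real.sqrt (Real.log 2 / |Real.log r|))) (fun z => |f z|))
      rw [hB]
      linarith [abs_nonneg (Mint D A
        (Ffun (Real.sqrt (Real.log 2 / |Real.log r|))) (fun z => |f z|) - L₁),
        (abs_sub_le_iff.1 hr1.le).1]
    filter_upwards [hev1, hev2] with r hrIoo hMB
    have hest := integral_est D A hD hA hAne hf hfc hG hqd hrIoo
    have h1 : ε₀ * (Real.sqrt (2 * Real.pi) *
        Mint D A (Ffun (Real.sqrt (Real.log 2 / |Real.log r|))) (fun z => |f z|))
        ≤ ε₀ * (Real.sqrt (2 * Real.pi) * B) :=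
      mul_le_mul_of_nonneg_left
        (mul_le_mul_of_nonneg_left hMB hsqrtpos.le) hε₀pos.le
    have h2 : ε₀ * (Real.sqrt (2 * Real.pi) * B) = ε := by
      rw [hε₀def, ← mul_assoc]
      field_simp
    exact le_trans hest (le_trans h1 (le_of_eq h2))
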